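/- arXiv:hep-th/0703279 — 3 statements merged into one kernel-verified Lean document; each statement's English description precedes it below -/
import Mathlib

section
/- Let B be a commutative ring, c ≥ 1, f₁,…,f_c ∈ B, and let C be a B-module equipped with a family of B-linear endomorphisms d_γ : C → C indexed by multi-indices γ ∈ ℕ^c satisfying: (i) d_o ∘ d_o = 0; (ii) d_o ∘ d_{ε_i} + d_{ε_i} ∘ d_o = −f_i · id_C for each i; and (iii) for every γ with |γ| ≥ 2, d_o ∘ d_γ + d_γ ∘ d_o = −Σ_{α+β=γ, α≠o, β≠o} d_α ∘ d_β. Let E be the B-module of finitely supported functions u : ℕ^c → C, and define the B-linear operator 𝒟 : E → E by (𝒟u)(β) = Σ_{γ ∈ ℕ^c} d_γ(u(β+γ)) (a finite sum since u is finitely supported). Then 𝒟 ∘ 𝒟 = −F, where F : E → E is the B-linear operator (Fu)(β) = Σ_{i=1}^{c} f_i · u(β+ε_i). -/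
/-! Expanding the definition, the β-component of `𝒟 (𝒟 u)` is
`Σ_σ (Σ_{α ≤ σ} d_α ∘ d_{σ-α}) (u (β + σ))`. The three homotopy relations say precisely that
the inner convolution vanishes for `σ = o` and for `|σ| ≥ 2`, and equals `-f_i • id` for
`σ = ε_i`; what is left is `-Σ_i f_i • u (β + ε_i) = -(F u) β`. -/

open Finset

theorem finsum_eq_sum_Iic_of_forall_not_le {κ M : Type*} [Preorder κ] [LocallyFiniteOrderBot κ]
    [AddCommMonoid M] {g : κ → M} (N : κ) (hg : ∀ γ, ¬γ ≤ N → g γ = 0) :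
    ∑ᶠ γ, g γ = ∑ γ ∈ Iic N, g γ :=
  finsum_eq_sum_of_support_subset g fun γ hγ => by
    simpa using not_imp_comm.mp (hg γ) hγ

theorem sum_Iic_eq_add_add_sum_filter {κ M : Type*} [AddCommMonoid κ] [PartialOrder κ]
    [CanonicallyOrderedAdd κ] [LocallyFiniteOrderBot κ] [DecidableEq κ] [AddCommMonoid M]
    {σ : κ} (hσ : σ ≠ 0) (g : κ → M) :
    ∑ α ∈ Iic σ, g α = g 0 + g σ + ∑ α ∈ (Iic σ).filter (fun α => α ≠ 0 ∧ α ≠ σ), g α := by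
  have hends : (Iic σ).filter (fun α => ¬(α ≠ 0 ∧ α ≠ σ)) = {0, σ} := by
    ext α
    simp only [mem_filter, mem_Iic, mem_insert, mem_singleton, not_and_or, not_not]
    constructor
    · exact fun h => h.2
    · rintro (rfl | rfl) <;> simp
  rw [← sum_filter_not_add_sum_filter _ (fun α => α ≠ 0 ∧ α ≠ σ), hends, sum_pair hσ.symm]

section Multiindex

variable {ι : Type*} [DecidableEq ι]

theorem Pi.single_one_ne_zero (i : ι) : (Pi.single i 1 : ι → ℕ) ≠ 0 :=
  fun h => by simpa using congrFun h i

theorem Pi.single_one_injective : Function.Injective (fun i : ι => (Pi.single i 1 : ι → ℕ)) :=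
  fun i j h => by_contra fun hij => by simpa [Pi.single_eq_of_ne hij] using congrFun h i

theorem Pi.eq_zero_or_eq_single_of_le_single {α : ι → ℕ} {i : ι} (h : α ≤ Pi.single i 1) :
    α = 0 ∨ α = Pi.single i 1 := by
  have hα : α = Pi.single i (α i) := funext fun j => by
    by_cases hj : j = i
    · subst hj; simp
    · simpa [Pi.single_eq_of_ne hj] using h j
  have hi : α i ≤ 1 := by simpa using h i
  interval_cases h' : α i <;> rw [hα] <;> simp

variable [Fintype ι]

theorem Pi.exists_eq_single_of_sum_eq_one {σ : ι → ℕ} (h : ∑ j, σ j = 1) :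
    ∃ i, σ = Pi.single i 1 := by
  obtain ⟨i, -, hi⟩ := exists_ne_zero_of_sum_ne_zero (h ▸ one_ne_zero)
  rw [← add_sum_erase _ _ (mem_univ i)] at h
  have hrest := sum_eq_zero_iff.mp (show ∑ j ∈ univ.erase i, σ j = 0 by omega)
  refine ⟨i, funext fun j => ?_⟩
  by_cases hj : j = i
  · subst hj
    rw [Pi.single_eq_same]
    omega
  · simp [Pi.single_eq_of_ne hj, hrest j (mem_erase.mpr ⟨hj, mem_univ j⟩)]

theorem sum_Iic_sum_Iic_eq_sum_Iic_sum_Iic_tsub {M : Type*} [AddCommMonoid M] (N : ι → ℕ)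
    {g : (ι → ℕ) → (ι → ℕ) → M} (hg : ∀ γ δ, ¬γ + δ ≤ N → g γ δ = 0) :
    ∑ γ ∈ Iic N, ∑ δ ∈ Iic N, g γ δ = ∑ σ ∈ Iic N, ∑ α ∈ Iic σ, g α (σ - α) := by
  classical
  rw [← sum_product', sum_sigma', ← sum_filter_of_ne (p := fun p => p.1 + p.2 ≤ N)
    fun p _ hp => not_imp_comm.mp (hg p.1 p.2) hp]
  refine sum_nbij' (fun p => ⟨p.1 + p.2, p.1⟩) (fun x => (x.2, x.1 - x.2)) ?_ ?_ ?_ ?_ ?_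
  · intro p hp
    simp only [mem_filter, mem_product, mem_Iic] at hp
    simpa using hp.2
  · intro x hx
    simp only [mem_sigma, mem_Iic] at hx
    simp only [mem_filter, mem_product, mem_Iic, add_tsub_cancel_of_le hx.2]
    exact ⟨⟨hx.2.trans hx.1, tsub_le_self.trans hx.1⟩, hx.1⟩
  · intro p _
    simp
  · intro x hx
    simp only [mem_sigma, mem_Iic] at hx
    simp [add_tsub_cancel_of_le hx.2]
  · intro p _
    simp

end Multiindex

section HigherHomotopies

variable {B C ι : Type*} [CommRing B] [AddCommGroup C] [Module B C] [Fintype ι] [DecidableEq ι]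
  {f : ι → B} {d : (ι → ℕ) → C →ₗ[B] C}

theorem sum_Iic_comp_tsub_single
    (h1 : ∀ i, d 0 ∘ₗ d (Pi.single i 1) + d (Pi.single i 1) ∘ₗ d 0 = (-(f i)) • LinearMap.id)
    (i : ι) :
    ∑ α ∈ Iic (Pi.single i 1), d α ∘ₗ d (Pi.single i 1 - α) = -(f i • LinearMap.id) := by
  rw [sum_Iic_eq_add_add_sum_filter (Pi.single_one_ne_zero i),
    filter_false_of_mem fun α hα => not_and_or.mpr <| by
      simpa using Pi.eq_zero_or_eq_single_of_le_single (mem_Iic.mp hα),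
    sum_empty, add_zero, tsub_zero, tsub_self, h1, neg_smul]

theorem sum_Iic_comp_tsub_eq_zero (h0 : d 0 ∘ₗ d 0 = 0)
    (h2 : ∀ γ : ι → ℕ, 2 ≤ ∑ i, γ i →
      d 0 ∘ₗ d γ + d γ ∘ₗ d 0 = -∑ α ∈ (Iic γ).filter (fun α => α ≠ 0 ∧ α ≠ γ), d α ∘ₗ d (γ - α))
    {σ : ι → ℕ} (hσ : ∀ i, σ ≠ Pi.single i 1) :
    ∑ α ∈ Iic σ, d α ∘ₗ d (σ - α) = 0 := by
  rcases eq_or_ne σ 0 with rfl | hσ0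
  · have hIic : Iic (0 : ι → ℕ) = {0} := by ext α; simp
    rw [hIic, sum_singleton, tsub_zero, h0]
  have h2σ : 2 ≤ ∑ i, σ i := by
    have hne0 : ∑ i, σ i ≠ 0 := fun h => hσ0 (funext fun i => sum_eq_zero_iff.mp h i (mem_univ i))
    have hne1 : ∑ i, σ i ≠ 1 := fun h => (Pi.exists_eq_single_of_sum_eq_one h).elim hσ
    omega
  rw [sum_Iic_eq_add_add_sum_filter hσ0, tsub_zero, tsub_self, h2 σ h2σ, neg_add_cancel]

theorem sum_Iic_sum_Iic_comp_tsub_apply (h0 : d 0 ∘ₗ d 0 = 0)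
    (h1 : ∀ i, d 0 ∘ₗ d (Pi.single i 1) + d (Pi.single i 1) ∘ₗ d 0 = (-(f i)) • LinearMap.id)
    (h2 : ∀ γ : ι → ℕ, 2 ≤ ∑ i, γ i →
      d 0 ∘ₗ d γ + d γ ∘ₗ d 0 = -∑ α ∈ (Iic γ).filter (fun α => α ≠ 0 ∧ α ≠ γ), d α ∘ₗ d (γ - α))
    {N : ι → ℕ} (hN : ∀ i, Pi.single i 1 ≤ N) (v : (ι → ℕ) → C) :
    ∑ σ ∈ Iic N, (∑ α ∈ Iic σ, d α ∘ₗ d (σ - α)) (v σ) = ∑ i, -(f i • v (Pi.single i 1)) := by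
  calc ∑ σ ∈ Iic N, (∑ α ∈ Iic σ, d α ∘ₗ d (σ - α)) (v σ)
      = ∑ σ ∈ univ.image fun i => Pi.single i 1, (∑ α ∈ Iic σ, d α ∘ₗ d (σ - α)) (v σ) := by
        refine (sum_subset (image_subset_iff.mpr fun i _ => mem_Iic.mpr (hN i))
          fun σ _ hσ => ?_).symm
        rw [sum_Iic_comp_tsub_eq_zero h0 h2 fun i h => hσ (mem_image.mpr ⟨i, mem_univ i, h.symm⟩),
          LinearMap.zero_apply]
    _ = ∑ i, (∑ α ∈ Iic (Pi.single i 1), d α ∘ₗ d (Pi.single i 1 - α)) (v (Pi.single i 1)) :=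
        sum_image fun i _ j _ h => Pi.single_one_injective h
    _ = ∑ i, -(f i • v (Pi.single i 1)) := by
        simp only [sum_Iic_comp_tsub_single h1, LinearMap.neg_apply, LinearMap.smul_apply,
          LinearMap.id_apply]

end HigherHomotopies

theorem stmt1_general {B : Type*} [CommRing B] (c : ℕ) (f : Fin c → B)
    {C : Type*} [AddCommGroup C] [Module B C]
    (d : (Fin c → ℕ) → C →ₗ[B] C)
    -- (i) d_o ∘ d_o = 0
    (h0 : d 0 ∘ₗ d 0 = 0)
    -- (ii) d_o ∘ d_{ε_i} + d_{ε_i} ∘ d_o = −f_i · id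
    (h1 : ∀ i : Fin c,
      d 0 ∘ₗ d (Pi.single i 1) + d (Pi.single i 1) ∘ₗ d 0
        = (-(f i)) • (LinearMap.id : C →ₗ[B] C))
    -- (iii) for |γ| ≥ 2: d_o ∘ d_γ + d_γ ∘ d_o = −Σ_{α+β=γ, α,β≠o} d_α ∘ d_β
    (h2 : ∀ γ : Fin c → ℕ, 2 ≤ ∑ i, γ i →
      d 0 ∘ₗ d γ + d γ ∘ₗ d 0 =
        -∑ α ∈ (Finset.Iic γ).filter (fun α => α ≠ 0 ∧ α ≠ γ), d α ∘ₗ d (γ - α))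
    -- E = finitely supported functions ℕ^c → C; 𝒟 and F are the operators described above
    (𝒟 F : ((Fin c → ℕ) →₀ C) →ₗ[B] ((Fin c → ℕ) →₀ C))
    (h𝒟 : ∀ (u : (Fin c → ℕ) →₀ C) (β : Fin c → ℕ),
      𝒟 u β = ∑ᶠ γ : Fin c → ℕ, d γ (u (β + γ)))
    (hF : ∀ (u : (Fin c → ℕ) →₀ C) (β : Fin c → ℕ),
      F u β = ∑ i : Fin c, f i • u (β + Pi.single i 1)) :
    𝒟 ∘ₗ 𝒟 = -F := by
  refine LinearMap.ext fun u => Finsupp.ext fun β => ?_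
  -- `N` must also dominate every `ε_i`, so that `Iic N` sees all the terms of `F u`.
  obtain ⟨N, hu, hsingle⟩ : ∃ N : Fin c → ℕ, (∀ v, ¬v ≤ N → u v = 0) ∧ ∀ i, Pi.single i 1 ≤ N :=
    ⟨u.support.sup id + 1,
      fun v hv => Finsupp.notMem_support_iff.mp fun hv' =>
        hv ((le_sup (f := id) hv').trans le_self_add),
      fun i j => by by_cases h : j = i <;> simp [h]⟩
  have h𝒟u : ∀ β', 𝒟 u β' = ∑ δ ∈ Iic N, d δ (u (β' + δ)) := fun β' =>
    (h𝒟 u β').trans <| finsum_eq_sum_Iic_of_forall_not_le N fun δ hδ => by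
      rw [hu _ fun h => hδ (le_add_self.trans h), map_zero]
  have h𝒟𝒟u : 𝒟 (𝒟 u) β = ∑ γ ∈ Iic N, d γ (𝒟 u (β + γ)) :=
    (h𝒟 _ β).trans <| finsum_eq_sum_Iic_of_forall_not_le N fun γ hγ => by
      rw [h𝒟u, sum_eq_zero fun δ _ => ?_, map_zero]
      rw [hu _ fun h => hγ (le_add_self.trans (le_self_add.trans h)), map_zero]
  calc 𝒟 (𝒟 u) β = ∑ γ ∈ Iic N, ∑ δ ∈ Iic N, d γ (d δ (u (β + γ + δ))) := by
        simp only [h𝒟𝒟u, h𝒟u, map_sum]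
    _ = ∑ σ ∈ Iic N, ∑ α ∈ Iic σ, d α (d (σ - α) (u (β + σ))) := by
        rw [sum_Iic_sum_Iic_eq_sum_Iic_sum_Iic_tsub N fun γ δ h => by
          rw [add_assoc, hu _ fun h' => h (le_add_self.trans h'), map_zero, map_zero]]
        refine sum_congr rfl fun σ _ => sum_congr rfl fun α hα => ?_
        rw [add_assoc, add_tsub_cancel_of_le (mem_Iic.mp hα)]
    _ = ∑ σ ∈ Iic N, (∑ α ∈ Iic σ, d α ∘ₗ d (σ - α)) (u (β + σ)) := by
        simp only [LinearMap.sum_apply, LinearMap.comp_apply]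
    _ = -F u β := by
        rw [sum_Iic_sum_Iic_comp_tsub_apply h0 h1 h2 hsingle, hF, sum_neg_distrib]

theorem stmt1 {B : Type*} [CommRing B] (c : ℕ) (hc : 1 ≤ c) (f : Fin c → B)
    {C : Type*} [AddCommGroup C] [Module B C]
    (d : (Fin c → ℕ) → C →ₗ[B] C)
    -- (i) d_o ∘ d_o = 0
    (h0 : d 0 ∘ₗ d 0 = 0)
    -- (ii) d_o ∘ d_{ε_i} + d_{ε_i} ∘ d_o = −f_i · id
    (h1 : ∀ i : Fin c,
      d 0 ∘ₗ d (Pi.single i 1) + d (Pi.single i 1) ∘ₗ d 0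
        = (-(f i)) • (LinearMap.id : C →ₗ[B] C))
    -- (iii) for |γ| ≥ 2: d_o ∘ d_γ + d_γ ∘ d_o = −Σ_{α+β=γ, α,β≠o} d_α ∘ d_β
    (h2 : ∀ γ : Fin c → ℕ, 2 ≤ ∑ i, γ i →
      d 0 ∘ₗ d γ + d γ ∘ₗ d 0 =
        -∑ α ∈ (Finset.Iic γ).filter (fun α => α ≠ 0 ∧ α ≠ γ), d α ∘ₗ d (γ - α))
    -- E = finitely supported functions ℕ^c → C; 𝒟 and F are the operators described above
    (𝒟 F : ((Fin c → ℕ) →₀ C) →ₗ[B] ((Fin c → ℕ) →₀ C))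
    (h𝒟 : ∀ (u : (Fin c → ℕ) →₀ C) (β : Fin c → ℕ),
      𝒟 u β = ∑ᶠ γ : Fin c → ℕ, d γ (u (β + γ)))
    (hF : ∀ (u : (Fin c → ℕ) →₀ C) (β : Fin c → ℕ),
      F u β = ∑ i : Fin c, f i • u (β + Pi.single i 1)) :
    𝒟 ∘ₗ 𝒟 = -F :=
  stmt1_general c f d h0 h1 h2 𝒟 F h𝒟 hF
end

section
/- Let B be a commutative ring, W ∈ B, and C a B-module. Let (d_j)_{j∈ℕ} be a family of B-linear endomorphisms of C with d_j = 0 for all but finitely many j, satisfying: (i) d₀ ∘ d₀ = 0; (ii) d₀ ∘ d₁ + d₁ ∘ d₀ = −W · id_C; and (iii) for every n ≥ 2, d₀ ∘ d_n + d_n ∘ d₀ = −Σ_{j+k=n, j≥1, k≥1} d_j ∘ d_k. Then the B-linear map p = Σ_{j∈ℕ} (−1)^j d_j satisfies p ∘ p = W · id_C. -/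
/-! With `D = Σ_j d_j X^j ∈ A[X]`, the higher-homotopy relations say exactly that `D² = -W X`.
Since `-1` is central, evaluation at `X = -1` is a ring homomorphism even for noncommutative `A`,
and it sends `D` to `p` and `-W X` to `W`. -/

open Polynomial Finset

lemma Finset.Nat.sum_antidiagonal_eq_add_add_sum_Ioo {M : Type*} [AddCommMonoid M]
    (f : ℕ → ℕ → M) {n : ℕ} (hn : 1 ≤ n) :
    ∑ x ∈ antidiagonal n, f x.1 x.2 = f 0 n + f n 0 + ∑ j ∈ Ioo 0 n, f j (n - j) := by
  have hrange : range (n + 1) = insert 0 (insert n (Ioo 0 n)) := by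
    ext k
    simp only [mem_range, mem_insert, mem_Ioo]
    omega
  rw [Nat.sum_antidiagonal_eq_sum_range_succ f, hrange, sum_insert (by simp; omega),
    sum_insert (by simp), Nat.sub_zero, Nat.sub_self, add_assoc]

lemma Polynomial.eval_eq_finsum {R : Type*} [Semiring R] (p : R[X]) (x : R) :
    p.eval x = ∑ᶠ j, p.coeff j * x ^ j := by
  rw [eval_eq_sum, Polynomial.sum_def, finsum_eq_sum_of_support_subset]
  exact fun j hj => mem_support_iff.2 (left_ne_zero_of_mul hj)

section HigherHomotopies

variable {B A : Type*} [CommRing B] [Ring A] [Algebra B A]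

lemma neg_one_pow_smul_eq_mul_neg_one_pow (j : ℕ) (a : A) :
    (-1 : B) ^ j • a = a * (-1) ^ j := by
  rw [Algebra.smul_def, Algebra.commutes]
  simp

variable {W : B} {d : ℕ → A}

lemma sum_antidiagonal_mul_eq_of_higherHomotopies (h0 : d 0 * d 0 = 0)
    (h1 : d 0 * d 1 + d 1 * d 0 = (-W) • 1)
    (h2 : ∀ n : ℕ, 2 ≤ n → d 0 * d n + d n * d 0 = -∑ j ∈ Ioo 0 n, d j * d (n - j))
    (n : ℕ) :
    ∑ x ∈ antidiagonal n, d x.1 * d x.2 = if n = 1 then (-W) • 1 else 0 := by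
  rcases n with _ | _ | n
  · simpa using h0
  · rw [Nat.sum_antidiagonal_eq_add_add_sum_Ioo (fun i j => d i * d j) le_rfl,
      show Ioo 0 1 = ∅ by decide, sum_empty, add_zero, h1, if_pos rfl]
  · rw [Nat.sum_antidiagonal_eq_add_add_sum_Ioo (fun i j => d i * d j) (by omega),
      h2 _ (by omega), neg_add_cancel, if_neg (by omega)]

theorem finsum_neg_one_pow_smul_mul_self_of_higherHomotopies
    (hfin : (Function.support d).Finite) (h0 : d 0 * d 0 = 0)
    (h1 : d 0 * d 1 + d 1 * d 0 = (-W) • 1)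
    (h2 : ∀ n : ℕ, 2 ≤ n → d 0 * d n + d n * d 0 = -∑ j ∈ Ioo 0 n, d j * d (n - j)) :
    (∑ᶠ j, (-1 : B) ^ j • d j) * (∑ᶠ j, (-1 : B) ^ j • d j) = W • 1 := by
  set D : A[X] := ofFinsupp (.ofCoeff (Finsupp.ofSupportFinite d hfin))
  have hcoeff : ∀ j, D.coeff j = d j := fun j => by
    simp [D, coeff_ofFinsupp, Finsupp.ofSupportFinite_coe]
  have hsq : D * D = C ((-W) • 1) * X := by
    ext n
    rw [coeff_mul, coeff_C_mul_X]
    simp only [hcoeff]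
    exact sum_antidiagonal_mul_eq_of_higherHomotopies h0 h1 h2 n
  let ev : A[X] →+* A := eval₂RingHom' (RingHom.id A) (-1) Commute.neg_one_right
  have hp : ∑ᶠ j, (-1 : B) ^ j • d j = ev D := by
    change _ = D.eval (-1)
    simp only [eval_eq_finsum, hcoeff, neg_one_pow_smul_eq_mul_neg_one_pow]
  rw [hp, ← map_mul, hsq]
  simp [ev]

end HigherHomotopies

theorem stmt2 {B : Type*} [CommRing B] (W : B)
    {C : Type*} [AddCommGroup C] [Module B C]
    (d : ℕ → C →ₗ[B] C)
    (hfin : {j : ℕ | d j ≠ 0}.Finite)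
    -- (i)
    (h0 : d 0 ∘ₗ d 0 = 0)
    -- (ii)
    (h1 : d 0 ∘ₗ d 1 + d 1 ∘ₗ d 0 = (-W) • (LinearMap.id : C →ₗ[B] C))
    -- (iii)
    (h2 : ∀ n : ℕ, 2 ≤ n →
      d 0 ∘ₗ d n + d n ∘ₗ d 0 = -∑ j ∈ Finset.Ioo 0 n, d j ∘ₗ d (n - j)) :
    (∑ᶠ j : ℕ, ((-1 : B) ^ j) • d j) ∘ₗ (∑ᶠ j : ℕ, ((-1 : B) ^ j) • d j)
      = W • (LinearMap.id : C →ₗ[B] C) := by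
  exact finsum_neg_one_pow_smul_mul_self_of_higherHomotopies (A := Module.End B C) hfin h0 h1 h2
end

section
/- Let k be a commutative ring, B = k[x₀,x₁,x₂,x₃,x₄], and let p, g, q be the 8×8 matrices over B defined below. Then g · g = s · p + p · s where s = −x₄² · q; that is, the composition g∘g is null-homotopic with respect to the matrix factorization p. Consequently the product m₂(g,g) of the open string state g with itself vanishes in the BRST cohomology. -/
/-! `p` is the Koszul matrix factorization of `a₀b₀ + a₁b₁ + a₂b₂`, and `q` acts as contraction
with the odd generator paired with `a₂`, `qᵀ` as multiplication by it. Hence `q² = 0`,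
`qqᵀ + qᵀq = 1` and `qp + pq = a₂`. Since `g = qᵀ − x₄³q`, the first two relations give
`g² = −x₄³`, and the third gives `sp + ps = −x₄²(qp + pq) = −x₄³`. -/

noncomputable section

open MvPolynomial

def a0 (k : Type*) [CommRing k] : MvPolynomial (Fin 5) k := X 0 + X 1
def a1 (k : Type*) [CommRing k] : MvPolynomial (Fin 5) k := X 2 + X 3
def a2 (k : Type*) [CommRing k] : MvPolynomial (Fin 5) k := X 4
def b0 (k : Type*) [CommRing k] : MvPolynomial (Fin 5) k :=
  X 0 ^ 4 - X 0 ^ 3 * X 1 + X 0 ^ 2 * X 1 ^ 2 - X 0 * X 1 ^ 3 + X 1 ^ 4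
def b1 (k : Type*) [CommRing k] : MvPolynomial (Fin 5) k :=
  X 2 ^ 4 - X 2 ^ 3 * X 3 + X 2 ^ 2 * X 3 ^ 2 - X 2 * X 3 ^ 3 + X 3 ^ 4
def b2 (k : Type*) [CommRing k] : MvPolynomial (Fin 5) k := X 4 ^ 4

def pmat (k : Type*) [CommRing k] : Matrix (Fin 8) (Fin 8) (MvPolynomial (Fin 5) k) :=
  !![0,    a0 k,  a1 k,  a2 k,  0,     0,     0,     0;
     b0 k, 0,     0,     0,     -a1 k, -a2 k, 0,     0;
     b1 k, 0,     0,     0,     a0 k,  0,     -a2 k, 0;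
     b2 k, 0,     0,     0,     0,     a0 k,  a1 k,  0;
     0,    -b1 k, b0 k,  0,     0,     0,     0,     a2 k;
     0,    -b2 k, 0,     b0 k,  0,     0,     0,     -a1 k;
     0,    0,     -b2 k, b1 k,  0,     0,     0,     a0 k;
     0,    0,     0,     0,     b2 k,  -b1 k, b0 k,  0]

def gmat (k : Type*) [CommRing k] : Matrix (Fin 8) (Fin 8) (MvPolynomial (Fin 5) k) :=
  !![0,          0,       0,       1, 0,          0,  0,  0;
     0,          0,       0,       0, 0,          -1, 0,  0;
     0,          0,       0,       0, 0,          0,  -1, 0;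
     -(X 4 ^ 3), 0,       0,       0, 0,          0,  0,  0;
     0,          0,       0,       0, 0,          0,  0,  1;
     0,          X 4 ^ 3, 0,       0, 0,          0,  0,  0;
     0,          0,       X 4 ^ 3, 0, 0,          0,  0,  0;
     0,          0,       0,       0, -(X 4 ^ 3), 0,  0,  0]

def qmat (k : Type*) [CommRing k] : Matrix (Fin 8) (Fin 8) (MvPolynomial (Fin 5) k) :=
  !![0, 0,  0,  0, 0, 0, 0, 0;
     0, 0,  0,  0, 0, 0, 0, 0;
     0, 0,  0,  0, 0, 0, 0, 0;
     1, 0,  0,  0, 0, 0, 0, 0;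
     0, 0,  0,  0, 0, 0, 0, 0;
     0, -1, 0,  0, 0, 0, 0, 0;
     0, 0,  -1, 0, 0, 0, 0, 0;
     0, 0,  0,  0, 1, 0, 0, 0]

/-- The null-homotopy `s = −x₄²·q`. -/
def smat (k : Type*) [CommRing k] : Matrix (Fin 8) (Fin 8) (MvPolynomial (Fin 5) k) :=
  (-(X 4 ^ 2) : MvPolynomial (Fin 5) k) • qmat k

open Matrix

section KoszulContraction

variable {α : Type*} [CommRing α]

def contractionMatrix : Matrix (Fin 8) (Fin 8) α :=
  !![0, 0,  0,  0, 0, 0, 0, 0;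
     0, 0,  0,  0, 0, 0, 0, 0;
     0, 0,  0,  0, 0, 0, 0, 0;
     1, 0,  0,  0, 0, 0, 0, 0;
     0, 0,  0,  0, 0, 0, 0, 0;
     0, -1, 0,  0, 0, 0, 0, 0;
     0, 0,  -1, 0, 0, 0, 0, 0;
     0, 0,  0,  0, 1, 0, 0, 0]

def koszulMatrix (a b : Fin 3 → α) : Matrix (Fin 8) (Fin 8) α :=
  !![0,   a 0,  a 1,  a 2, 0,    0,    0,    0;
     b 0, 0,    0,    0,   -a 1, -a 2, 0,    0;
     b 1, 0,    0,    0,   a 0,  0,    -a 2, 0;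
     b 2, 0,    0,    0,   0,    a 0,  a 1,  0;
     0,   -b 1, b 0,  0,   0,    0,    0,    a 2;
     0,   -b 2, 0,    b 0, 0,    0,    0,    -a 1;
     0,   0,    -b 2, b 1, 0,    0,    0,    a 0;
     0,   0,    0,    0,   b 2,  -b 1, b 0,  0]

theorem contractionMatrix_mul_self :
    (contractionMatrix : Matrix (Fin 8) (Fin 8) α) * contractionMatrix = 0 := by
  rw [contractionMatrix]
  simp [← Matrix.ext_iff, Fin.forall_fin_succ]

theorem contractionMatrix_mul_transpose_add :
    (contractionMatrix : Matrix (Fin 8) (Fin 8) α) * contractionMatrixᵀ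
      + contractionMatrixᵀ * contractionMatrix = 1 := by
  ext i j
  simp only [Matrix.add_apply, mul_apply, transpose_apply, Fin.sum_univ_eight]
  fin_cases i <;> fin_cases j <;> simp [contractionMatrix]

theorem contractionMatrix_mul_add_mul_contractionMatrix (a b : Fin 3 → α) :
    contractionMatrix * koszulMatrix a b + koszulMatrix a b * contractionMatrix = a 2 • 1 := by
  rw [contractionMatrix, koszulMatrix]
  simp [← Matrix.ext_iff, Fin.forall_fin_succ, one_apply]

theorem transpose_sub_smul_contractionMatrix_mul_self (c : α) :
    (contractionMatrixᵀ - c • contractionMatrix) * (contractionMatrixᵀ - c • contractionMatrix) =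
      -c • (1 : Matrix (Fin 8) (Fin 8) α) := by
  have hT : (contractionMatrixᵀ : Matrix (Fin 8) (Fin 8) α) * contractionMatrixᵀ = 0 := by
    rw [← transpose_mul, contractionMatrix_mul_self, transpose_zero]
  calc (contractionMatrixᵀ - c • contractionMatrix) * (contractionMatrixᵀ - c • contractionMatrix)
      = contractionMatrixᵀ * contractionMatrixᵀ
          - c • (contractionMatrix * contractionMatrixᵀ + contractionMatrixᵀ * contractionMatrix)
          + (c * c) • (contractionMatrix * contractionMatrix) := by
        simp only [sub_mul, mul_sub, Matrix.smul_mul, Matrix.mul_smul, smul_smul, smul_add]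
        module
    _ = -c • (1 : Matrix (Fin 8) (Fin 8) α) := by
        rw [hT, contractionMatrix_mul_self, contractionMatrix_mul_transpose_add]
        simp

end KoszulContraction

theorem pmat_eq_koszulMatrix (k : Type*) [CommRing k] :
    pmat k = koszulMatrix ![a0 k, a1 k, a2 k] ![b0 k, b1 k, b2 k] := rfl

theorem qmat_eq_contractionMatrix (k : Type*) [CommRing k] : qmat k = contractionMatrix := rfl

theorem gmat_eq_transpose_sub_smul (k : Type*) [CommRing k] :
    gmat k = contractionMatrixᵀ - (X 4 ^ 3 : MvPolynomial (Fin 5) k) • contractionMatrix := by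
  rw [gmat, contractionMatrix]
  simp [← Matrix.ext_iff, Fin.forall_fin_succ]

theorem stmt12 (k : Type*) [CommRing k] :
    gmat k * gmat k = smat k * pmat k + pmat k * smat k := by
  rw [gmat_eq_transpose_sub_smul, transpose_sub_smul_contractionMatrix_mul_self, smat,
    Matrix.smul_mul, Matrix.mul_smul, ← smul_add, qmat_eq_contractionMatrix, pmat_eq_koszulMatrix,
    contractionMatrix_mul_add_mul_contractionMatrix, smul_smul]
  congr 1
  simp only [cons_val_two, tail_cons, head_cons, a2]
  ring

end
end
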